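/- arXiv:1806.04717 — 2 statements merged into one kernel-verified Lean document; each statement's English description precedes it below -/
import Mathlib

section
/- Suppose the replacement rule satisfies Assumption 3 (coherence of individuals) and Assumption 4 (fair meiosis). If sites g, h ∈ G reside in the same individual (g ∼ h), then d_g(x) = d_h(x) and e_{gℓ}(x) = e_{hℓ}(x) for every state x ∈ {0,1}^G and every site ℓ ∈ G. If, in addition, Assumption 1 (consistency of monoallelic states) holds, then v_g = v_h and w_g(x) = w_h(x) for every state x. -/
/-!
Common formal scaffold for "A mathematical formalism for natural selection
with arbitrary spatial and genetic structure" (Allen & McAvoy).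

A population is a finite nonempty set `G` of genetic sites.  A state is a
subset of `G` (the set of sites occupied by allele `A`); `∅` is the
monoallelic state `a` and `Finset.univ` is the monoallelic state `A`.
A replacement event is a pair `(R, α)` with `R ⊆ G` and `α : R → G`.
-/

open Filter Topology Set

namespace NatSel

variable (G : Type) [Fintype G] [DecidableEq G]

/-- A state of the population: the set of sites holding allele `A`. -/
abbrev PopState := Finset G

/-- A replacement event `(R, α)`: the replaced set `R ⊆ G` together with the
parentage map `α : R → G`. -/
abbrev RepEvent := Σ R : Finset G, (↥R → G)

variable {G}

/-- `x_g ∈ {0,1}` as a real number. -/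
def xg (x : PopState G) (g : G) : ℝ := if g ∈ x then 1 else 0

/-- `α̃` : agrees with `α` on `R`, is the identity off `R`. -/
def tildeMap (e : RepEvent G) (g : G) : G :=
  if h : g ∈ e.1 then e.2 ⟨g, h⟩ else g

/-- `p` is a replacement rule: for each state it gives a probability
distribution over replacement events. -/
def IsRule (p : PopState G → RepEvent G → ℝ) : Prop :=
  (∀ x e, 0 ≤ p x e) ∧ ∀ x, ∑ e : RepEvent G, p x e = 1

/-- The Fixation Axiom. -/
def FixationAxiom (p : PopState G → RepEvent G → ℝ) : Prop :=
  ∃ g : G, ∃ m : ℕ, 0 < m ∧ ∃ ev : Fin m → RepEvent G,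
    (∀ k, ∀ x : PopState G, 0 < p x (ev k)) ∧
    (∃ k, g ∈ (ev k).1) ∧
    (∀ h : G, (List.ofFn fun k => tildeMap (ev k)).foldr (· ∘ ·) id h = g)

/-- `e_{gh}(x)`: marginal probability that the allele in site `h` is replaced
by a copy of the allele in site `g`, in state `x`. -/
def eMarg (p : PopState G → RepEvent G → ℝ) (g h : G) (x : PopState G) : ℝ :=
  ∑ e : RepEvent G, if hh : h ∈ e.1 then (if e.2 ⟨h, hh⟩ = g then p x e else 0) else 0

/-- `b_g(x)`: expected offspring number (birth rate) of site `g` in state `x`. -/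
def bRate (p : PopState G → RepEvent G → ℝ) (g : G) (x : PopState G) : ℝ :=
  ∑ h, eMarg p g h x

/-- `d_g(x)`: death probability of site `g` in state `x`. -/
def dProb (p : PopState G → RepEvent G → ℝ) (g : G) (x : PopState G) : ℝ :=
  ∑ h, eMarg p h g x

/-- `b(x)`: total expected offspring number in state `x`. -/
def bTot (p : PopState G → RepEvent G → ℝ) (x : PopState G) : ℝ :=
  ∑ g, bRate p g x

/-- Probability that a replaced site whose parent holds allele `parent`
(`true` = `A`) acquires allele `child`, with mutation probability `u` and
mutational bias `ν`. -/
def siteProb (u ν : ℝ) (parent child : Bool) : ℝ :=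
  (if child = parent then 1 - u else 0) + (if child = true then u * ν else u * (1 - ν))

/-- One-step transition probability `P_{x → y}` of the evolutionary Markov
chain with replacement rule `p`, mutation probability `u`, mutational bias `ν`. -/
def step (p : PopState G → RepEvent G → ℝ) (u ν : ℝ) (x y : PopState G) : ℝ :=
  ∑ e : RepEvent G, p x e *
    (if y \ e.1 = x \ e.1 then
       ∏ g ∈ e.1.attach, siteProb u ν (decide (e.2 g ∈ x)) (decide (g.1 ∈ y))
     else 0)

/-- `t`-step transition probabilities of a kernel `P`. -/
def iterKer (P : PopState G → PopState G → ℝ) : ℕ → PopState G → PopState G → ℝ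
  | 0, x, y => if x = y then 1 else 0
  | (t + 1), x, y => ∑ z : PopState G, iterKer P t x z * P z y

/-- The state obtained from `x` by the (mutation-free) replacement event `e`. -/
def applyEvent (e : RepEvent G) (x : PopState G) : PopState G :=
  Finset.univ.filter fun g => tildeMap e g ∈ x

/-- One-step transition probability of the mutation-free (`u = 0`) chain. -/
def step0 (p : PopState G → RepEvent G → ℝ) (x y : PopState G) : ℝ :=
  ∑ e : RepEvent G, if y = applyEvent e x then p x e else 0

/-- The mutant appearance distribution `μ_A`: probability `d_g(a)/b(a)` on the
state `{g}`, for each `g ∈ G`. -/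
noncomputable def muA (p : PopState G → RepEvent G → ℝ) (x : PopState G) : ℝ :=
  ∑ g : G, if x = {g} then dProb p g ∅ / bTot p ∅ else 0

/-- The mutant appearance distribution `μ_a`: probability `d_g(A)/b(A)` on the
state `G \ {g}`, for each `g ∈ G`. -/
noncomputable def mua (p : PopState G → RepEvent G → ℝ) (x : PopState G) : ℝ :=
  ∑ g : G, if x = Finset.univ \ {g} then dProb p g Finset.univ / bTot p Finset.univ else 0

/-- Fixation probability `ρ_A` (computed at `u = 0`). -/
noncomputable def rhoA (p : PopState G → RepEvent G → ℝ) (ν : ℝ) : ℝ :=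
  ∑ x : PopState G, muA p x *
    limUnder atTop (fun t => iterKer (step p 0 ν) t x Finset.univ)

/-- Fixation probability `ρ_a` (computed at `u = 0`). -/
noncomputable def rhoa (p : PopState G → RepEvent G → ℝ) (ν : ℝ) : ℝ :=
  ∑ x : PopState G, mua p x *
    limUnder atTop (fun t => iterKer (step p 0 ν) t x ∅)

/-- Frequency `x = (1/n) Σ_g x_g` of allele `A`. -/
noncomputable def freq (x : PopState G) : ℝ := (x.card : ℝ) / (Fintype.card G : ℝ)

/-- Expected change due to selection, `Δ_sel(x) = Σ_g x_g (b_g(x) − d_g(x))`. -/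
def deltaSel (p : PopState G → RepEvent G → ℝ) (x : PopState G) : ℝ :=
  ∑ g, xg x g * (bRate p g x - dProb p g x)

/-- The finset of states other than the monoallelic states `a = ∅`, `A = univ`. -/
def offStates (G : Type) [Fintype G] [DecidableEq G] : Finset (PopState G) :=
  Finset.univ.filter fun x : PopState G => x ≠ ∅ ∧ x ≠ Finset.univ

/-- Assumption 1: consistency of monoallelic states. -/
def ConsistentMono (p : PopState G → RepEvent G → ℝ) : Prop :=
  ∀ e : RepEvent G, p ∅ e = p Finset.univ e

/-- A replacement rule represents neutral drift: probabilities are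
state-independent. -/
def NeutralDrift (p : PopState G → RepEvent G → ℝ) : Prop :=
  ∀ x e, p x e = p ∅ e

/-- Reproductive values: `{v_g}` solves `d°_g v_g = Σ_h e°_{gh} v_h` (with the
monoallelic-state quantities) together with `Σ_g v_g = n`. -/
def IsRepVal (p : PopState G → RepEvent G → ℝ) (v : G → ℝ) : Prop :=
  (∀ g, dProb p g ∅ * v g = ∑ h, eMarg p g h ∅ * v h) ∧
    ∑ g, v g = (Fintype.card G : ℝ)

/-- RV-weighted birth rate `b̂_g(x) = Σ_h e_{gh}(x) v_h`. -/
def bHat (p : PopState G → RepEvent G → ℝ) (v : G → ℝ) (g : G) (x : PopState G) : ℝ :=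
  ∑ h, eMarg p g h x * v h

/-- RV-weighted death rate `d̂_g(x) = v_g d_g(x)`. -/
def dHat (p : PopState G → RepEvent G → ℝ) (v : G → ℝ) (g : G) (x : PopState G) : ℝ :=
  v g * dProb p g x

/-- Total RV-weighted birth rate `b̂(x)`. -/
def bHatTot (p : PopState G → RepEvent G → ℝ) (v : G → ℝ) (x : PopState G) : ℝ :=
  ∑ g, bHat p v g x

/-- RV-weighted change due to selection `Δ̂_sel(x) = Σ_g x_g (b̂_g(x) − d̂_g(x))`. -/
def deltaHatSel (p : PopState G → RepEvent G → ℝ) (v : G → ℝ) (x : PopState G) : ℝ :=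
  ∑ g, xg x g * (bHat p v g x - dHat p v g x)

/-- Fitness `w_g(x) = v_g − d̂_g(x) + b̂_g(x)`. -/
def fitness (p : PopState G → RepEvent G → ℝ) (v : G → ℝ) (g : G) (x : PopState G) : ℝ :=
  v g - dHat p v g x + bHat p v g x

/-- RV-weighted frequency `x̂ = (1/n) Σ_g v_g x_g`. -/
noncomputable def freqHat (v : G → ℝ) (x : PopState G) : ℝ :=
  (∑ g, v g * xg x g) / (Fintype.card G : ℝ)

/-- `{π u}_{0<u≤1}` is, for each mutation probability `0 < u ≤ 1`, a stationary
distribution of the evolutionary Markov chain (i.e. the mutation-selection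
stationary distribution, which is unique by ergodicity). -/
def IsMSSFamily (p : PopState G → RepEvent G → ℝ) (ν : ℝ)
    (π : ℝ → PopState G → ℝ) : Prop :=
  ∀ u, u ∈ Set.Ioc (0 : ℝ) 1 →
    (∀ x, 0 ≤ π u x) ∧ (∑ x : PopState G, π u x = 1) ∧
      ∀ y, π u y = ∑ x : PopState G, π u x * step p u ν x y

/-- `πR` is the rare-mutation conditional (RMC) distribution associated with
the MSS family `π`: for each non-monoallelic state `x`,
`πR x = lim_{u→0} π_MSS(x)/(1 − π_MSS(A) − π_MSS(a))`. -/
def IsRMC (π : ℝ → PopState G → ℝ) (πR : PopState G → ℝ) : Prop :=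
  ∀ x ∈ offStates G,
    Tendsto (fun u => π u x / (1 - π u Finset.univ - π u ∅))
      (nhdsWithin 0 (Set.Ioi 0)) (nhds (πR x))

end NatSel

namespace NatSel

variable {G : Type} [Fintype G] [DecidableEq G]

/-- Assumption 3 (coherence of individuals): sites of the same individual are
replaced together.  Here `ind : G → I` assigns to each site its individual. -/
def Coherent {I : Type} (ind : G → I) (p : PopState G → RepEvent G → ℝ) : Prop :=
  ∀ g h : G, ind g = ind h →
    ∀ (x : PopState G) (e : RepEvent G), 0 < p x e → (g ∈ e.1 ↔ h ∈ e.1)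

/-- Assumption 4 (fair meiosis): two replacement events with the same replaced
set whose parentage maps agree at the level of individuals are equally likely. -/
def FairMeiosis {I : Type} (ind : G → I) (p : PopState G → RepEvent G → ℝ) : Prop :=
  ∀ e₁ e₂ : RepEvent G, ∀ heq : e₁.1 = e₂.1,
    (∀ g : ↥e₁.1, ind (e₁.2 g) = ind (e₂.2 ⟨g.1, heq ▸ g.2⟩)) →
    ∀ x : PopState G, p x e₁ = p x e₂

/-!
Coherence says that `g ∼ h` are replaced by exactly the same events of positive probability,
so `d_g = d_h`. By fair meiosis, relabelling parents through the transposition `(g h)` is a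
probability-preserving involution of replacement events; it exchanges the events in which `ℓ`
inherits from `g` with those in which `ℓ` inherits from `h`, so `e_{gℓ} = e_{hℓ}`. The Fixation
Axiom makes every death probability positive (a site lying in no `R_k` would be fixed by
`α̃_1 ∘ ⋯ ∘ α̃_m` instead of being sent to `g`), so the reproductive-value equation
`d°_g v_g = Σ_ℓ e°_{gℓ} v_ℓ` expresses `v_g` through quantities that `g` and `h` share.
-/

end NatSel

lemma List.foldr_comp_apply_of_forall_apply_eq {α : Type*} (a : α) :
    ∀ l : List (α → α), (∀ f ∈ l, f a = a) → l.foldr (· ∘ ·) id a = a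
  | [], _ => rfl
  | f :: l, hl => by
    rw [List.foldr_cons, Function.comp_apply,
      foldr_comp_apply_of_forall_apply_eq a l fun f' hf' => hl f' (List.mem_cons_of_mem f hf'),
      hl f List.mem_cons_self]

lemma Equiv.apply_swap_apply_of_apply_eq {α β : Type*} [DecidableEq α] {f : α → β} {a b : α}
    (hab : f a = f b) (x : α) : f (Equiv.swap a b x) = f x := by
  rw [Equiv.swap_apply_def]
  split_ifs with hxa hxb
  · rw [hxa, hab]
  · rw [hxb, hab]
  · rfl

namespace NatSel

lemma tildeMap_of_not_mem {G : Type} [DecidableEq G] {e : RepEvent G} {g : G} (hg : g ∉ e.1) :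
    tildeMap e g = g := by
  simp [tildeMap, hg]

def relabelParents {G : Type} (σ : Equiv.Perm G) : RepEvent G ≃ RepEvent G :=
  Equiv.sigmaCongrRight fun _ => Equiv.piCongrRight fun _ => σ

lemma relabelParents_apply {G : Type} (σ : Equiv.Perm G) (e : RepEvent G) :
    relabelParents σ e = ⟨e.1, fun k => σ (e.2 k)⟩ :=
  rfl

variable {G : Type} [Fintype G] [DecidableEq G] {p : PopState G → RepEvent G → ℝ}

lemma dProb_eq_sum (g : G) (x : PopState G) :
    dProb p g x = ∑ e : RepEvent G, if g ∈ e.1 then p x e else 0 := by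
  unfold dProb eMarg
  rw [Finset.sum_comm]
  refine Finset.sum_congr rfl fun e _ => ?_
  by_cases hg : g ∈ e.1 <;> simp [hg]

lemma FixationAxiom.exists_mem_replaced (hfix : FixationAxiom p) (ℓ : G) :
    ∃ e : RepEvent G, (∀ x, 0 < p x e) ∧ ℓ ∈ e.1 := by
  obtain ⟨g, m, -, ev, hpos, ⟨k, hgk⟩, hcomp⟩ := hfix
  by_contra! hnone
  have hℓ : ℓ ≠ g := by rintro rfl; exact hnone (ev k) (hpos k) hgk
  refine hℓ (List.foldr_comp_apply_of_forall_apply_eq ℓ _ ?_ ▸ hcomp ℓ)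
  simp only [List.mem_ofFn, forall_exists_index]
  rintro _ k rfl
  exact tildeMap_of_not_mem (hnone (ev k) (hpos k))

lemma dProb_pos_of_fixationAxiom (hp : ∀ x e, 0 ≤ p x e) (hfix : FixationAxiom p)
    (ℓ : G) (x : PopState G) : 0 < dProb p ℓ x := by
  obtain ⟨e, he, hℓ⟩ := hfix.exists_mem_replaced ℓ
  rw [dProb_eq_sum]
  calc 0 < p x e := he x
    _ = if ℓ ∈ e.1 then p x e else 0 := (if_pos hℓ).symm
    _ ≤ ∑ e : RepEvent G, if ℓ ∈ e.1 then p x e else 0 :=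
      Finset.single_le_sum (f := fun e : RepEvent G => if ℓ ∈ e.1 then p x e else 0)
        (fun e _ => by split_ifs <;> simp [hp x e]) (Finset.mem_univ e)

section Individuals

variable {I : Type} {ind : G → I}

lemma dProb_eq_of_coherent (hp : ∀ x e, 0 ≤ p x e) (hcoh : Coherent ind p) {g h : G}
    (hgh : ind g = ind h) (x : PopState G) : dProb p g x = dProb p h x := by
  rw [dProb_eq_sum, dProb_eq_sum]
  refine Finset.sum_congr rfl fun e _ => ?_
  rcases (hp x e).eq_or_lt with hzero | hpos
  · simp [← hzero]
  · simp only [hcoh g h hgh x e hpos]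

lemma eMarg_perm_apply (hfair : FairMeiosis ind p) {σ : Equiv.Perm G}
    (hσ : ∀ a, ind (σ a) = ind a) (g ℓ : G) (x : PopState G) :
    eMarg p (σ g) ℓ x = eMarg p g ℓ x := by
  refine (Fintype.sum_equiv (relabelParents σ) _ _ fun e => ?_).symm
  have hprob : p x ⟨e.1, fun k => σ (e.2 k)⟩ = p x e :=
    hfair ⟨e.1, fun k => σ (e.2 k)⟩ e rfl (fun k => hσ (e.2 k)) x
  by_cases hℓ : ℓ ∈ e.1
  · simp [relabelParents_apply, hℓ, hprob]
  · simp [relabelParents_apply, hℓ]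

lemma eMarg_eq_of_fairMeiosis (hfair : FairMeiosis ind p) {g h : G} (hgh : ind g = ind h)
    (ℓ : G) (x : PopState G) : eMarg p g ℓ x = eMarg p h ℓ x := by
  simpa using (eMarg_perm_apply hfair (Equiv.apply_swap_apply_of_apply_eq hgh) g ℓ x).symm

end Individuals

lemma IsRepVal.eq_of_eMarg_eq {v : G → ℝ} (hv : IsRepVal p v) {g h : G}
    (hdpos : 0 < dProb p g ∅) (hd : dProb p g ∅ = dProb p h ∅)
    (he : ∀ ℓ, eMarg p g ℓ ∅ = eMarg p h ℓ ∅) : v g = v h := by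
  refine mul_left_cancel₀ hdpos.ne' ?_
  rw [hv.1 g, hd, hv.1 h]
  simp only [he]

lemma fitness_eq_of_eq {v : G → ℝ} {g h : G} {x : PopState G} (hv : v g = v h)
    (hd : dProb p g x = dProb p h x) (he : ∀ ℓ, eMarg p g ℓ x = eMarg p h ℓ x) :
    fitness p v g x = fitness p v h x := by
  simp only [fitness, dHat, bHat, hv, hd, he]

theorem statement14_general
    {G : Type} [Fintype G] [DecidableEq G]
    {I : Type} (ind : G → I)
    (p : PopState G → RepEvent G → ℝ) (hrule : IsRule p) (hfix : FixationAxiom p)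
    (hcoh : Coherent ind p) (hfair : FairMeiosis ind p) :
    (∀ g h : G, ind g = ind h →
      (∀ x : PopState G, dProb p g x = dProb p h x) ∧
      (∀ (x : PopState G) (ℓ : G), eMarg p g ℓ x = eMarg p h ℓ x)) ∧
    (ConsistentMono p →
      ∀ v : G → ℝ, IsRepVal p v →
        ∀ g h : G, ind g = ind h →
          v g = v h ∧ ∀ x : PopState G, fitness p v g x = fitness p v h x) := by
  have hd := fun g h (hgh : ind g = ind h) => dProb_eq_of_coherent hrule.1 hcoh hgh
  have he := fun g h (hgh : ind g = ind h) x ℓ => eMarg_eq_of_fairMeiosis hfair hgh ℓ x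
  refine ⟨fun g h hgh => ⟨hd g h hgh, he g h hgh⟩, fun _ v hv g h hgh => ?_⟩
  have hvgh : v g = v h :=
    hv.eq_of_eMarg_eq (dProb_pos_of_fixationAxiom hrule.1 hfix g ∅) (hd g h hgh ∅)
      (he g h hgh ∅)
  exact ⟨hvgh, fun x => fitness_eq_of_eq hvgh (hd g h hgh x) (he g h hgh x)⟩

/-- Lemma 3 of Allen & McAvoy: under Assumptions 3 and 4,
sites residing in the same individual have the same death probabilities and
the same marginal offspring probabilities in every state; if moreover
Assumption 1 holds, they have the same reproductive value and fitness. -/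
theorem statement14
    {G : Type} [Fintype G] [DecidableEq G] [Nonempty G]
    {I : Type} (ind : G → I)
    (p : PopState G → RepEvent G → ℝ) (hrule : IsRule p) (hfix : FixationAxiom p)
    (hcoh : Coherent ind p) (hfair : FairMeiosis ind p) :
    (∀ g h : G, ind g = ind h →
      (∀ x : PopState G, dProb p g x = dProb p h x) ∧
      (∀ (x : PopState G) (ℓ : G), eMarg p g ℓ x = eMarg p h ℓ x)) ∧
    (ConsistentMono p →
      ∀ v : G → ℝ, IsRepVal p v →
        ∀ g h : G, ind g = ind h →
          v g = v h ∧ ∀ x : PopState G, fitness p v g x = fitness p v h x) :=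
  statement14_general ind p hrule hfix hcoh hfair

end NatSel
end

section
/- Let G be the vertex set of a connected weighted (undirected) graph with nonnegative edge weights ω_{gh} = ω_{hg}, weighted degrees ω_g = Σ_h ω_{gh} > 0, total weighted degree Ω = Σ_h ω_h, and total inverse weighted degree Ω̃ = Σ_h ω_h^{-1}, with n = |G|. Let random-walk step probabilities be p_{gh} = ω_{gh}/ω_g. For neutral Birth-Death updating, where e°_{gh} = p_{gh}/n, the unique solution of the reproductive-value equations d°_g v_g = Σ_h e°_{gh} v_h (with d°_g = Σ_h e°_{hg}) and Σ_g v_g = n is v_g = n ω_g^{-1}/Ω̃. For neutral Death-Birth updating, where e°_{gh} = p_{hg}/n, the unique solution is v_g = n ω_g/Ω. -/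
/-!
Common formal scaffold for "A mathematical formalism for natural selection
with arbitrary spatial and genetic structure" (Allen & McAvoy).

A population is a finite nonempty set `G` of genetic sites.  A state is a
subset of `G` (the set of sites occupied by allele `A`); `∅` is the
monoallelic state `a` and `Finset.univ` is the monoallelic state `A`.
A replacement event is a pair `(R, α)` with `R ⊆ G` and `α : R → G`.
-/

open Filter Topology Set

namespace NatSel

variable {G : Type} [Fintype G] [DecidableEq G]

/-- Weighted degree `ω_g = Σ_h ω_{gh}` of a vertex. -/
def wdeg (ω : G → G → ℝ) (g : G) : ℝ := ∑ h, ω g h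

/-- Neutral marginal replacement kernel for Birth-Death updating:
`e°_{gh} = p_{gh}/n` with `p_{gh} = ω_{gh}/ω_g`. -/
noncomputable def eBD (ω : G → G → ℝ) (g h : G) : ℝ :=
  ω g h / wdeg ω g / (Fintype.card G : ℝ)

/-- Neutral marginal replacement kernel for Death-Birth updating:
`e°_{gh} = p_{hg}/n`. -/
noncomputable def eDB (ω : G → G → ℝ) (g h : G) : ℝ :=
  ω h g / wdeg ω h / (Fintype.card G : ℝ)

/-- `d°_g = Σ_h e°_{hg}` for a marginal kernel `e`. -/
def dKer (e : G → G → ℝ) (g : G) : ℝ := ∑ h, e h g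

/-- `v` solves the reproductive-value equations for the marginal kernel `e`. -/
def IsRVKer (e : G → G → ℝ) (v : G → ℝ) : Prop :=
  (∀ g, dKer e g * v g = ∑ h, e g h * v h) ∧ ∑ g, v g = (Fintype.card G : ℝ)

end NatSel

/-!
Both claims rest on a discrete maximum principle. Multiplying the reproductive-value equation
at `g` by a suitable positive factor turns it into a balance equation
`∑_h c_{gh} (u_g - u_h) = 0` for `u_g = v_g / s_g`, with `c ≥ 0` positive exactly on the edges:
`s_g = ω_g⁻¹`, `c_{gh} = ω_{gh} / ω_h` for Birth-Death and `s_g = ω_g`, `c_{gh} = ω_{gh}` for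
Death-Birth. At a maximum of `u` all terms of the balance equation are nonnegative, hence zero,
so `u` is constant along edges and, by connectivity, everywhere; the normalisation
`∑ v = n` then fixes the constant to `n / ∑ s`.
-/

namespace NatSel

open Finset

variable {G : Type} [Fintype G]

theorem eq_of_forall_sum_mul_sub_eq_zero [Nonempty G] (c : G → G → ℝ) (hc : ∀ g h, 0 ≤ c g h)
    (hconn : ∀ g h, Relation.ReflTransGen (fun a b => 0 < c a b) g h) (u : G → ℝ)
    (hbal : ∀ g, ∑ h, c g h * (u g - u h) = 0) (g h : G) : u g = u h := by
  obtain ⟨g₀, hmax⟩ := Finite.exists_max u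
  have edge : ∀ a b, u a = u g₀ → 0 < c a b → u b = u g₀ := by
    intro a b ha hab
    have hterm : ∀ x, 0 ≤ c a x * (u a - u x) :=
      fun x => mul_nonneg (hc a x) (by linarith [hmax x])
    have hb := (sum_eq_zero_iff_of_nonneg fun x _ => hterm x).mp (hbal a) b (mem_univ b)
    have := (mul_eq_zero.mp hb).resolve_left hab.ne'
    linarith
  have hall : ∀ x, u x = u g₀ := fun x => by
    induction hconn g₀ x with
    | refl => rfl
    | tail _ hab ih => exact edge _ _ ih hab
  rw [hall g, hall h]

theorem isRVKer_iff_of_balance [Nonempty G] (e c : G → G → ℝ) (s k : G → ℝ)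
    (hc : ∀ g h, 0 ≤ c g h) (hconn : ∀ g h, Relation.ReflTransGen (fun a b => 0 < c a b) g h)
    (hs : ∀ g, 0 < s g) (hk : ∀ g, k g ≠ 0)
    (hbal : ∀ (v : G → ℝ) g,
      dKer e g * v g - ∑ h, e g h * v h = k g * ∑ h, c g h * (v g / s g - v h / s h))
    (v : G → ℝ) :
    IsRVKer e v ↔ ∀ g, v g = (Fintype.card G : ℝ) * s g / ∑ h, s h := by
  have hS : ∑ h, s h ≠ 0 := (sum_pos (fun h _ => hs h) univ_nonempty).ne'
  constructor
  · rintro ⟨hrv, hsum⟩ g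
    have hconst := eq_of_forall_sum_mul_sub_eq_zero c hc hconn (fun g => v g / s g) fun g =>
      (mul_eq_zero.mp (by rw [← hbal, hrv, sub_self])).resolve_left (hk g)
    have hsum' : ∑ h, v h = v g / s g * ∑ h, s h := by
      rw [mul_sum]
      exact sum_congr rfl fun h _ => by rw [hconst g h, div_mul_cancel₀ _ (hs h).ne']
    rw [← hsum, hsum']
    field_simp [(hs g).ne']
  · intro hv
    have hratio : ∀ g, v g / s g = (Fintype.card G : ℝ) / ∑ h, s h := fun g => by
      rw [hv g]
      field_simp [(hs g).ne']
    refine ⟨fun g => sub_eq_zero.mp ?_, ?_⟩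
    · simp only [hbal, hratio, sub_self, mul_zero, sum_const_zero]
    · simp only [hv, ← sum_div, ← mul_sum]
      field_simp

theorem dKer_eBD_mul_sub_sum (ω : G → G → ℝ) (hsymm : ∀ g h, ω g h = ω h g)
    (hdeg : ∀ g, wdeg ω g ≠ 0) (v : G → ℝ) (g : G) :
    dKer (eBD ω) g * v g - ∑ h, eBD ω g h * v h =
      ((Fintype.card G : ℝ) * wdeg ω g)⁻¹ *
        ∑ h, ω g h / wdeg ω h * (v g / (wdeg ω g)⁻¹ - v h / (wdeg ω h)⁻¹) := by
  rw [dKer, sum_mul, ← sum_sub_distrib, mul_sum]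
  refine sum_congr rfl fun h _ => ?_
  rw [eBD, eBD, hsymm h g]
  field_simp [hdeg g, hdeg h]

theorem dKer_eDB_mul_sub_sum (ω : G → G → ℝ) (hsymm : ∀ g h, ω g h = ω h g)
    (v : G → ℝ) (g : G) :
    dKer (eDB ω) g * v g - ∑ h, eDB ω g h * v h =
      (Fintype.card G : ℝ)⁻¹ * ∑ h, ω g h * (v g / wdeg ω g - v h / wdeg ω h) := by
  rw [dKer, sum_mul, ← sum_sub_distrib, mul_sum]
  refine sum_congr rfl fun h _ => ?_
  rw [eDB, eDB, hsymm g h]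
  ring

theorem statement16_general
    {G : Type} [Fintype G] [Nonempty G]
    (ω : G → G → ℝ)
    (hsymm : ∀ g h, ω g h = ω h g)
    (hnonneg : ∀ g h, 0 ≤ ω g h)
    (hdeg : ∀ g, 0 < wdeg ω g)
    (hconn : ∀ g h : G, Relation.ReflTransGen (fun a b => 0 < ω a b) g h) :
    (∀ v : G → ℝ, IsRVKer (eBD ω) v ↔
      ∀ g, v g = (Fintype.card G : ℝ) * (wdeg ω g)⁻¹ / (∑ h, (wdeg ω h)⁻¹)) ∧
    (∀ v : G → ℝ, IsRVKer (eDB ω) v ↔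
      ∀ g, v g = (Fintype.card G : ℝ) * wdeg ω g / (∑ h, wdeg ω h)) := by
  have hn : (Fintype.card G : ℝ) ≠ 0 := Nat.cast_ne_zero.mpr Fintype.card_ne_zero
  have hdeg' : ∀ g, wdeg ω g ≠ 0 := fun g => (hdeg g).ne'
  have hconnBD : ∀ g h, Relation.ReflTransGen (fun a b => 0 < ω a b / wdeg ω b) g h :=
    fun g h => Relation.ReflTransGen.mono (fun a b hab => div_pos hab (hdeg b)) g h (hconn g h)
  exact ⟨isRVKer_iff_of_balance (eBD ω) (fun g h => ω g h / wdeg ω h) (fun g => (wdeg ω g)⁻¹)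
      (fun g => ((Fintype.card G : ℝ) * wdeg ω g)⁻¹)
      (fun g h => div_nonneg (hnonneg g h) (hdeg h).le) hconnBD (fun g => inv_pos.mpr (hdeg g))
      (fun g => inv_ne_zero (mul_ne_zero hn (hdeg' g))) (dKer_eBD_mul_sub_sum ω hsymm hdeg'),
    isRVKer_iff_of_balance (eDB ω) ω (wdeg ω) (fun _ => (Fintype.card G : ℝ)⁻¹) hnonneg hconn
      hdeg (fun _ => inv_ne_zero hn) (dKer_eDB_mul_sub_sum ω hsymm)⟩

/-- reproductive values on weighted graphs, Allen & McAvoy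
§7.1: on a connected weighted graph, for neutral Birth-Death updating the
unique solution of the reproductive-value equations is
`v_g = n ω_g⁻¹ / Ω̃`, and for neutral Death-Birth updating it is
`v_g = n ω_g / Ω`. -/
theorem statement16
    {G : Type} [Fintype G] [DecidableEq G] [Nonempty G]
    (ω : G → G → ℝ)
    (hsymm : ∀ g h, ω g h = ω h g)
    (hnonneg : ∀ g h, 0 ≤ ω g h)
    (hdeg : ∀ g, 0 < wdeg ω g)
    (hconn : ∀ g h : G, Relation.ReflTransGen (fun a b => 0 < ω a b) g h) :
    (∀ v : G → ℝ, IsRVKer (eBD ω) v ↔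
      ∀ g, v g = (Fintype.card G : ℝ) * (wdeg ω g)⁻¹ / (∑ h, (wdeg ω h)⁻¹)) ∧
    (∀ v : G → ℝ, IsRVKer (eDB ω) v ↔
      ∀ g, v g = (Fintype.card G : ℝ) * wdeg ω g / (∑ h, wdeg ω h)) :=
  statement16_general ω hsymm hnonneg hdeg hconn

end NatSel
end
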